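/- arXiv:2103.01799 — 3 statements merged into one kernel-verified Lean document; each statement's English description precedes it below -/
import Mathlib

section
/- Under the standing assumptions (n ≥ 3, q = p^h with h ≥ 2, and q ≥ max{32, 2^(2n−4)} if h > 2, q ≥ 2^(2n) if h = 2), for every i with 1 ≤ i ≤ n one has θ_i − Δ_{n,q}·q^(i−1) + 1 ≤ U(n,i,q), and for i = 1 this inequality is an equality. -/
open Module

noncomputable section

/-- `pgTheta q m = 1 + q + … + q^m` for `m ≥ 0`, and `0` for `m < 0`. -/
def pgTheta (q : ℕ) (m : ℤ) : ℤ := ∑ i ∈ Finset.range (m + 1).toNat, (q : ℤ) ^ i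

/-- `q^j`, truncated to `0` for negative exponents `j`. -/
def pgQpow (q : ℕ) (j : ℤ) : ℤ := if j < 0 then 0 else (q : ℤ) ^ j.toNat

/-- `Δ_{i,q}` where `q = p^h`: `⌊√q / 2^(i-2)⌋` if `h > 2`, and `⌊p / 2^i⌋` if `h = 2`. -/
noncomputable def pgDelta (p h : ℕ) (i : ℤ) : ℤ :=
  if 2 < h then ⌊Real.sqrt ((p : ℝ) ^ h) / (2 : ℝ) ^ (i - 2)⌋
  else ⌊(p : ℝ) / (2 : ℝ) ^ i⌋

/-- `W(i,q) = (Δ_{i,q} - 1)·θ_{i-1}`. -/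
noncomputable def pgW (p h : ℕ) (i : ℤ) : ℤ := (pgDelta p h i - 1) * pgTheta (p ^ h) (i - 1)

/-- `U(n,i,q) = q^i − (Δ_{n,q} − 2)·⌊q^(i−1)⌋ − (i−2)·((q−1)·Δ_{n,q} + 1)·⌊q^(i−3)⌋ + θ_{i−3}`. -/
noncomputable def pgU (p h n : ℕ) (i : ℤ) : ℤ :=
  pgQpow (p ^ h) i - (pgDelta p h n - 2) * pgQpow (p ^ h) (i - 1)
    - (i - 2) * ((((p ^ h : ℕ) : ℤ) - 1) * pgDelta p h n + 1) * pgQpow (p ^ h) (i - 3)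
    + pgTheta (p ^ h) (i - 3)

/-- `⌈w / θ_m⌉` as a natural number. -/
noncomputable def pgCeil (q w : ℕ) (m : ℤ) : ℕ := (⌈(w : ℚ) / ((pgTheta q m : ℤ) : ℚ)⌉).toNat

/-! Since `θ_m = θ_{m-1} + q^m` for every integer `m`, the gap `U(n,i,q) - (θ_i - Δ q^(i-1) + 1)`
collapses to `q^(i-1) - q^(i-2) - (i-2)((q-1)Δ + 1) q^(i-3) - 1`, which is `0` at `i = 1`.
For `i ≥ 2` it is nonnegative once `(i-2)((q-1)Δ + 1) + q + 1 ≤ q²`, and this follows from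
`n < q` and `(n-2)Δ < q`; the latter holds because `Δ·2^(n-2) ≤ √q` and `n - 2 ≤ 2^(n-2)`. -/

lemma pgQpow_natCast (q k : ℕ) : pgQpow q k = (q : ℤ) ^ k := by simp [pgQpow]

lemma pgQpow_zero (q : ℕ) : pgQpow q 0 = 1 := by simp [pgQpow]

lemma pgQpow_of_neg (q : ℕ) {j : ℤ} (hj : j < 0) : pgQpow q j = 0 := if_pos hj

lemma pgTheta_eq_pgTheta_sub_one_add (q : ℕ) (m : ℤ) :
    pgTheta q m = pgTheta q (m - 1) + pgQpow q m := by
  rcases lt_or_ge m 0 with hm | hm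
  · simp [pgTheta, pgQpow_of_neg q hm, show (m + 1).toNat = 0 by omega,
      show m.toNat = 0 by omega]
  · lift m to ℕ using hm
    simp [pgTheta, pgQpow_natCast, Finset.sum_range_succ]

lemma pgU_sub_eq (p h n : ℕ) (i : ℤ) :
    pgU p h n i - (pgTheta (p ^ h) i - pgDelta p h n * pgQpow (p ^ h) (i - 1) + 1) =
      pgQpow (p ^ h) (i - 1) - pgQpow (p ^ h) (i - 2)
        - (i - 2) * ((((p ^ h : ℕ) : ℤ) - 1) * pgDelta p h n + 1) * pgQpow (p ^ h) (i - 3) - 1 := by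
  have h₀ := pgTheta_eq_pgTheta_sub_one_add (p ^ h) i
  have h₁ := pgTheta_eq_pgTheta_sub_one_add (p ^ h) (i - 1)
  have h₂ := pgTheta_eq_pgTheta_sub_one_add (p ^ h) (i - 2)
  rw [show i - 1 - 1 = i - 2 by ring] at h₁
  rw [show i - 2 - 1 = i - 3 by ring] at h₂
  rw [pgU]
  linear_combination -h₀ - h₁ - h₂

lemma mul_pgQpow_add_pgQpow_add_one_le (q : ℕ) {M i : ℤ} (hM : 0 ≤ M) (hi : 2 ≤ i)
    (hle : (i - 2) * M + q + 1 ≤ (q : ℤ) ^ 2) :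
    (i - 2) * M * pgQpow q (i - 3) + pgQpow q (i - 2) + 1 ≤ pgQpow q (i - 1) := by
  have hq : (2 : ℤ) ≤ q := by nlinarith [mul_nonneg (sub_nonneg.mpr hi) hM]
  obtain ⟨k, rfl⟩ : ∃ k : ℕ, i = k + 2 := ⟨(i - 2).toNat, by omega⟩
  rw [show (k : ℤ) + 2 - 1 = (k + 1 : ℕ) by push_cast; ring, add_sub_cancel_right,
    pgQpow_natCast, pgQpow_natCast] at *
  rcases k with _ | k
  · simp [pgQpow_of_neg]
    omega
  · rw [show ((k + 1 : ℕ) : ℤ) + 2 - 3 = (k : ℕ) by push_cast; ring, pgQpow_natCast]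
    have hqk : (1 : ℤ) ≤ (q : ℤ) ^ k := one_le_pow₀ (by omega)
    have := mul_le_mul_of_nonneg_right hle (zero_le_one.trans hqk)
    have e₁ : (q : ℤ) ^ (k + 1 + 1) = q ^ 2 * q ^ k := by ring
    have e₂ : (q : ℤ) ^ (k + 1) = q * q ^ k := by ring
    rw [e₁, e₂]
    push_cast at this ⊢
    nlinarith

lemma pgDelta_nonneg (p h : ℕ) (i : ℤ) : 0 ≤ pgDelta p h i := by
  unfold pgDelta
  split_ifs <;> positivity

lemma pgDelta_mul_two_zpow_le_sqrt (p : ℕ) {h : ℕ} (hh : 2 ≤ h) (i : ℤ) :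
    (pgDelta p h i : ℝ) * 2 ^ (i - 2) ≤ √((p : ℝ) ^ h) := by
  have hD := pgDelta_nonneg p h i
  unfold pgDelta at hD ⊢
  split_ifs at hD ⊢ with h₂
  · exact (le_div_iff₀ (by positivity)).mp (Int.floor_le _)
  · obtain rfl : h = 2 := by omega
    rw [Real.sqrt_sq (Nat.cast_nonneg p)]
    calc (⌊(p : ℝ) / 2 ^ i⌋ : ℝ) * 2 ^ (i - 2) ≤ ⌊(p : ℝ) / 2 ^ i⌋ * 2 ^ i :=
          mul_le_mul_of_nonneg_left (zpow_le_zpow_right₀ (by norm_num) (by omega))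
            (by exact_mod_cast hD)
      _ ≤ p := (le_div_iff₀ (by positivity)).mp (Int.floor_le _)

lemma int_le_two_zpow (m : ℤ) : (m : ℝ) ≤ 2 ^ m := by
  rcases lt_or_ge m 0 with hm | hm
  · exact (Int.cast_lt_zero.mpr hm).le.trans (by positivity)
  · lift m to ℕ using hm
    exact_mod_cast (Nat.lt_two_pow_self).le

lemma sub_two_mul_pgDelta_lt (p : ℕ) {h : ℕ} (hh : 2 ≤ h) (hq : 1 < p ^ h) (n : ℤ) :
    (n - 2) * pgDelta p h n < ((p ^ h : ℕ) : ℤ) := by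
  have hD : (0 : ℝ) ≤ pgDelta p h n := by exact_mod_cast pgDelta_nonneg p h n
  have hq' : (1 : ℝ) < ((p ^ h : ℕ) : ℝ) := by exact_mod_cast hq
  suffices ((n - 2) * pgDelta p h n : ℝ) < ((p ^ h : ℕ) : ℝ) by exact_mod_cast this
  calc ((n - 2) * pgDelta p h n : ℝ) ≤ 2 ^ (n - 2) * pgDelta p h n := by
        gcongr
        exact_mod_cast int_le_two_zpow (n - 2)
    _ ≤ √((p : ℝ) ^ h) := by
        rw [mul_comm]
        exact pgDelta_mul_two_zpow_le_sqrt p hh n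
    _ < ((p ^ h : ℕ) : ℝ) := by
        rw [← Nat.cast_pow p h]
        exact Real.sqrt_lt_self_iff.mpr hq'

lemma sub_two_mul_add_le_sq {q D n i : ℤ} (hD : 0 ≤ D) (hi : 2 ≤ i) (hin : i ≤ n)
    (hnq : n < q) (hDq : (n - 2) * D < q) : (i - 2) * ((q - 1) * D + 1) + q + 1 ≤ q ^ 2 := by
  have hq : 0 ≤ q - 1 := by omega
  have hM : 0 ≤ (q - 1) * D + 1 := by positivity
  nlinarith [mul_le_mul_of_nonneg_right (show i - 2 ≤ n - 2 by omega) hM,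
    mul_le_mul_of_nonneg_left (show (n - 2) * D ≤ q - 1 by omega) hq]

lemma lt_pow_of_standing_bounds {p h n : ℕ} (hh : 2 ≤ h)
    (hq1 : 2 < h → max 32 (2 ^ (2 * n - 4)) ≤ p ^ h)
    (hq2 : h = 2 → 2 ^ (2 * n) ≤ p ^ h) : n < p ^ h := by
  have hn : n < 2 ^ n := Nat.lt_two_pow_self
  rcases hh.lt_or_eq with h₂ | rfl
  · refine lt_of_lt_of_le ?_ (hq1 h₂)
    rcases lt_or_ge n 32 with h32 | h32
    · exact lt_max_of_lt_left h32
    · exact lt_max_of_lt_right (hn.trans_le (Nat.pow_le_pow_right (by norm_num) (by omega)))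
  · exact hn.trans_le ((Nat.pow_le_pow_right (by norm_num) (by omega)).trans (hq2 rfl))

theorem statement_2_general (p h n : ℕ) (hh : 2 ≤ h)
    (hq1 : 2 < h → max 32 (2 ^ (2 * n - 4)) ≤ p ^ h)
    (hq2 : h = 2 → 2 ^ (2 * n) ≤ p ^ h) :
    (∀ i : ℕ, 1 ≤ i → i ≤ n →
      pgTheta (p ^ h) i - pgDelta p h n * pgQpow (p ^ h) ((i : ℤ) - 1) + 1 ≤
        pgU p h n i) ∧
    pgTheta (p ^ h) 1 - pgDelta p h n * pgQpow (p ^ h) 0 + 1 = pgU p h n 1 := by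
  have heq : pgTheta (p ^ h) 1 - pgDelta p h n * pgQpow (p ^ h) 0 + 1 = pgU p h n 1 := by
    have := pgU_sub_eq p h n 1
    norm_num [pgQpow_of_neg, pgQpow_zero] at this
    rw [pgQpow_zero]
    linarith
  refine ⟨fun i hi hin => ?_, heq⟩
  rcases hi.eq_or_lt with rfl | hi
  · exact_mod_cast heq.le
  have hi : (2 : ℤ) ≤ i := by exact_mod_cast hi
  have hnq := lt_pow_of_standing_bounds hh hq1 hq2
  have hD := pgDelta_nonneg p h n
  have hle := sub_two_mul_add_le_sq hD hi (by exact_mod_cast hin) (by exact_mod_cast hnq)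
    (sub_two_mul_pgDelta_lt p hh (by omega) n)
  have hM : 0 ≤ (((p ^ h : ℕ) : ℤ) - 1) * pgDelta p h n + 1 := by
    have : (1 : ℤ) ≤ ((p ^ h : ℕ) : ℤ) := by omega
    nlinarith
  have := mul_pgQpow_add_pgQpow_add_one_le (p ^ h) hM hi hle
  rw [← sub_nonneg, pgU_sub_eq]
  linarith

/-- Proposition: `θ_i − Δ_{n,q}·q^(i−1) + 1 ≤ U(n,i,q)` for all `1 ≤ i ≤ n`,
with equality when `i = 1`. -/
theorem statement_2 (p h n : ℕ) (hp : p.Prime) (hh : 2 ≤ h) (hn : 3 ≤ n)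
    (hq1 : 2 < h → max 32 (2 ^ (2 * n - 4)) ≤ p ^ h)
    (hq2 : h = 2 → 2 ^ (2 * n) ≤ p ^ h) :
    (∀ i : ℕ, 1 ≤ i → i ≤ n →
      pgTheta (p ^ h) i - pgDelta p h n * pgQpow (p ^ h) ((i : ℤ) - 1) + 1 ≤
        pgU p h n i) ∧
    pgTheta (p ^ h) 1 - pgDelta p h n * pgQpow (p ^ h) 0 + 1 = pgU p h n 1 :=
  statement_2_general p h n hh hq1 hq2
end
end

section
/- Under the standing assumptions, let c and c' be codewords of C_{n−1}(n,q) with supp(c') ⊆ supp(c) and wt(c) ≤ W(n,q). Suppose S is a set of exactly ⌈wt(c)/θ_{n−1}⌉ pairwise distinct hyperplanes and (α_H)_{H∈S} are nonzero scalars in ℤ/pℤ with c = Σ_{H∈S} α_H·f_H, and suppose S' is a set of exactly ⌈wt(c')/θ_{n−1}⌉ pairwise distinct hyperplanes and (β_H)_{H∈S'} are nonzero scalars in ℤ/pℤ with c' = Σ_{H∈S'} β_H·f_H. Then S' ⊆ S. -/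
/-!
Suppose `H' ∈ S' \ S`. A point of `H'` on no other hyperplane of `S'` has `c' = β_{H'} ≠ 0`
there, hence `c ≠ 0`, so it lies on a hyperplane of `S`. Thus `H'` is covered by the at most
`|S| + |S'| - 1` hyperplanes of `S ∪ S' \ {H'}`. Since `wt(c') ≤ wt(c) ≤ (Δ - 1) θ_{n-1}`, both
`|S|` and `|S'|` are at most `Δ - 1`, and `Δ ≤ √q` gives `2Δ - 3 ≤ q`. But `q` other hyperplanes
cover at most `q θ_{n-2} = θ_{n-1} - 1` points of `H'`.
-/

open Module

noncomputable section

open scoped Classical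

/-- A point of `PG(n,q)`: a 1-dimensional subspace of `F^(n+1)`. -/
abbrev PGPoint (F : Type) [Field F] (n : ℕ) :=
  {P : Submodule F (Fin (n + 1) → F) // finrank F P = 1}

/-- The indicator function of a subspace `κ`, with values in `ZMod p`. -/
noncomputable def pgInd (p : ℕ) (F : Type) [Field F] (n : ℕ)
    (κ : Submodule F (Fin (n + 1) → F)) : PGPoint F n → ZMod p :=
  fun P => if P.1 ≤ κ then 1 else 0

/-- The code `C_{n-1}(n,q)`: the `ZMod p`-span of the indicator functions of all
hyperplanes (i.e. `n`-dimensional subspaces of `F^(n+1)`). -/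
noncomputable def pgCode (p : ℕ) (F : Type) [Field F] (n : ℕ) :
    Submodule (ZMod p) (PGPoint F n → ZMod p) :=
  Submodule.span (ZMod p)
    {f | ∃ H : Submodule F (Fin (n + 1) → F), finrank F H = n ∧ f = pgInd p F n H}

/-- The weight of a codeword: the number of points where it is nonzero. -/
noncomputable def pgWt (p : ℕ) (F : Type) [Field F] (n : ℕ)
    (c : PGPoint F n → ZMod p) : ℕ :=
  Set.ncard {P : PGPoint F n | c P ≠ 0}

/-- The number of points of `supp c` lying in the subspace `κ`. -/
noncomputable def pgSecant (p : ℕ) (F : Type) [Field F] (n : ℕ)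
    (c : PGPoint F n → ZMod p) (κ : Submodule F (Fin (n + 1) → F)) : ℕ :=
  Set.ncard {P : PGPoint F n | c P ≠ 0 ∧ P.1 ≤ κ}

/-- A codeword `c` is minimal if every codeword whose support is contained in the
support of `c` is a scalar multiple of `c`. -/
noncomputable def pgMinimal (p : ℕ) (F : Type) [Field F] (n : ℕ)
    (c : PGPoint F n → ZMod p) : Prop :=
  ∀ c' ∈ pgCode p F n, {P : PGPoint F n | c' P ≠ 0} ⊆ {P : PGPoint F n | c P ≠ 0} →
    ∃ α : ZMod p, c' = α • c

open Finset

section Indicator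

variable {p : ℕ} {F : Type} [Field F] {n : ℕ}

theorem exists_mem_le_of_sum_mul_pgInd_ne_zero {S : Finset (Submodule F (Fin (n + 1) → F))}
    {α : Submodule F (Fin (n + 1) → F) → ZMod p} {P : PGPoint F n}
    (h : ∑ H ∈ S, α H * pgInd p F n H P ≠ 0) : ∃ H ∈ S, P.1 ≤ H := by
  obtain ⟨H, hH, hne⟩ := exists_ne_zero_of_sum_ne_zero h
  exact ⟨H, hH, by_contra fun hPH => hne (by simp [pgInd, hPH])⟩

theorem sum_mul_pgInd_eq_of_forall_not_le {S : Finset (Submodule F (Fin (n + 1) → F))}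
    {β : Submodule F (Fin (n + 1) → F) → ZMod p} {H' : Submodule F (Fin (n + 1) → F)}
    (hH' : H' ∈ S) {P : PGPoint F n} (hP : P.1 ≤ H') (hK : ∀ K ∈ S, K ≠ H' → ¬ P.1 ≤ K) :
    ∑ H ∈ S, β H * pgInd p F n H P = β H' := by
  rw [sum_eq_single_of_mem H' hH' fun K hKS hne => by simp [pgInd, hK K hKS hne]]
  simp [pgInd, hP]

end Indicator

theorem Submodule.not_le_of_finrank_eq_of_ne {K V : Type*} [DivisionRing K] [AddCommGroup V]
    [Module K V] {U W : Submodule K V} [FiniteDimensional K U]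
    (h : finrank K U = finrank K W) (hne : U ≠ W) : ¬ W ≤ U :=
  fun hle => hne (Submodule.eq_of_le_of_finrank_eq hle h.symm).symm

section Counting

variable {F : Type} [Field F] [Fintype F] {n : ℕ}

def pgPointLeEquiv (W : Submodule F (Fin (n + 1) → F)) :
    {P : PGPoint F n | P.1 ≤ W} ≃ {L : Submodule F W // finrank F L = 1} where
  toFun P := ⟨Submodule.comap W.subtype P.1.1, by
    rw [← Submodule.finrank_map_subtype_eq, Submodule.map_comap_subtype,
      inf_of_le_right (P.2 : P.1.1 ≤ W), P.1.2]⟩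
  invFun L := ⟨⟨L.1.map W.subtype, by rw [Submodule.finrank_map_subtype_eq, L.2]⟩,
    Submodule.map_subtype_le _ _⟩
  left_inv P := Subtype.ext <| Subtype.ext <|
    (Submodule.map_comap_subtype _ _).trans (inf_of_le_right P.2)
  right_inv L := Subtype.ext (Submodule.comap_map_eq_of_injective W.injective_subtype _)

theorem ncard_pgPoint_le (W : Submodule F (Fin (n + 1) → F)) :
    {P : PGPoint F n | P.1 ≤ W}.ncard = ∑ i ∈ range (finrank F W), Fintype.card F ^ i := by
  rw [← Nat.card_coe_set_eq, Nat.card_congr ((pgPointLeEquiv W).trans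
    (Projectivization.equivSubmodule F W).symm), Projectivization.card_of_finrank F W rfl,
    Nat.card_eq_fintype_card]

/-- Each `K ⊓ W` is a proper subspace of `W`, so with `d = finrank F W` each `K` contains at most
`θ_{d-2}` of the `θ_{d-1} = q θ_{d-2} + 1` points of `W`. -/
theorem exists_pgPoint_le_forall_not_le {W : Submodule F (Fin (n + 1) → F)}
    (hW : finrank F W ≠ 0) (T : Finset (Submodule F (Fin (n + 1) → F)))
    (hT : ∀ K ∈ T, ¬ W ≤ K) (hcard : T.card ≤ Fintype.card F) :
    ∃ P : PGPoint F n, P.1 ≤ W ∧ ∀ K ∈ T, ¬ P.1 ≤ K := by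
  by_contra! hcover
  set q := Fintype.card F
  obtain ⟨e, he⟩ := Nat.exists_eq_succ_of_ne_zero hW
  have hmeet : ∀ K ∈ T, {P : PGPoint F n | P.1 ≤ K ⊓ W}.ncard ≤ ∑ i ∈ range e, q ^ i := by
    intro K hK
    have : finrank F ↥(K ⊓ W) < finrank F W :=
      Submodule.finrank_lt_finrank_of_lt <|
        inf_le_right.lt_of_ne fun h => hT K hK (h ▸ inf_le_left)
    rw [ncard_pgPoint_le]
    exact sum_le_sum_of_subset (range_subset_range.2 (by omega))
  have := calc ∑ i ∈ range (e + 1), q ^ i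
      = {P : PGPoint F n | P.1 ≤ W}.ncard := by rw [ncard_pgPoint_le, he]
    _ ≤ (⋃ K ∈ T, {P : PGPoint F n | P.1 ≤ K ⊓ W}).ncard :=
        Set.ncard_le_ncard fun P hP => by
          obtain ⟨K, hK, hPK⟩ := hcover P hP
          exact Set.mem_biUnion hK (le_inf hPK hP)
    _ ≤ ∑ K ∈ T, {P : PGPoint F n | P.1 ≤ K ⊓ W}.ncard := T.set_ncard_biUnion_le _
    _ ≤ T.card * ∑ i ∈ range e, q ^ i := by simpa using sum_le_card_nsmul T _ _ hmeet
    _ ≤ q * ∑ i ∈ range e, q ^ i := by gcongr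
  rw [geom_sum_succ] at this
  omega

end Counting

theorem pgTheta_pos {q : ℕ} {m : ℤ} (hm : 0 ≤ m) : 0 < pgTheta q m :=
  calc (0 : ℤ) < (q : ℤ) ^ 0 := one_pos
    _ ≤ pgTheta q m := single_le_sum (fun i _ => by positivity) (mem_range.2 (by omega))

theorem pgCeil_le_of_le_mul {q w : ℕ} {m k : ℤ} (hθ : 0 < pgTheta q m)
    (hw : (w : ℤ) ≤ k * pgTheta q m) : (pgCeil q w m : ℤ) ≤ k := by
  have hceil : ⌈(w : ℚ) / (pgTheta q m : ℚ)⌉ ≤ k := by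
    rw [Int.ceil_le, div_le_iff₀ (by exact_mod_cast hθ)]
    exact_mod_cast hw
  have hk : 0 ≤ k := nonneg_of_mul_nonneg_left (w.cast_nonneg.trans hw) hθ
  rw [pgCeil, Int.toNat_eq_max]
  exact max_le hceil hk

theorem pgCeil_le_pgDelta_sub_one {p h n w : ℕ} (hn : 1 ≤ n) (hw : (w : ℤ) ≤ pgW p h n) :
    (pgCeil (p ^ h) w (n - 1) : ℤ) ≤ pgDelta p h n - 1 :=
  pgCeil_le_of_le_mul (pgTheta_pos (by omega)) hw

theorem pgDelta_le_sqrt {p h n : ℕ} (hh : 2 ≤ h) (hn : 2 ≤ n) :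
    (pgDelta p h n : ℝ) ≤ √((p : ℝ) ^ h) := by
  unfold pgDelta
  split_ifs with h2
  · exact (Int.floor_le _).trans
      (div_le_self (Real.sqrt_nonneg _) (one_le_zpow₀ one_le_two (by omega)))
  · obtain rfl : h = 2 := by omega
    rw [Real.sqrt_sq (Nat.cast_nonneg p)]
    exact (Int.floor_le _).trans
      (div_le_self (Nat.cast_nonneg p) (one_le_zpow₀ one_le_two (by omega)))

theorem two_mul_pgDelta_le {p h n : ℕ} (hh : 2 ≤ h) (hn : 2 ≤ n) :
    2 * pgDelta p h n ≤ ((p ^ h : ℕ) : ℤ) + 1 := by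
  have hΔ := pgDelta_le_sqrt (p := p) hh hn
  have hsq := Real.sq_sqrt (by positivity : (0 : ℝ) ≤ (p : ℝ) ^ h)
  have : (2 * pgDelta p h n : ℝ) ≤ (p : ℝ) ^ h + 1 := by
    nlinarith [sq_nonneg (√((p : ℝ) ^ h) - 1)]
  exact_mod_cast this

theorem statement_8_general (p h n : ℕ) (hh : 2 ≤ h) (hn : 2 ≤ n)
    (F : Type) [Field F] [Fintype F] (hF : Fintype.card F = p ^ h)
    (c c' : PGPoint F n → ZMod p)
    (hsupp : {P : PGPoint F n | c' P ≠ 0} ⊆ {P : PGPoint F n | c P ≠ 0})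
    (hwt : (pgWt p F n c : ℤ) ≤ pgW p h n)
    (S S' : Finset (Submodule F (Fin (n + 1) → F)))
    (hScard : S.card = pgCeil (p ^ h) (pgWt p F n c) ((n : ℤ) - 1))
    (hS'card : S'.card = pgCeil (p ^ h) (pgWt p F n c') ((n : ℤ) - 1))
    (hShyp : ∀ H ∈ S, finrank F H = n) (hS'hyp : ∀ H ∈ S', finrank F H = n)
    (α β : Submodule F (Fin (n + 1) → F) → ZMod p)
    (hβ : ∀ H ∈ S', β H ≠ 0)
    (hrepc : c = fun P => ∑ H ∈ S, α H * pgInd p F n H P)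
    (hrepc' : c' = fun P => ∑ H ∈ S', β H * pgInd p F n H P) :
    S' ⊆ S := by
  intro H' hH'S'
  by_contra hH'S
  have hwt' : (pgWt p F n c' : ℤ) ≤ pgWt p F n c := by
    exact_mod_cast Set.ncard_le_ncard hsupp
  have hS := hScard ▸ pgCeil_le_pgDelta_sub_one (by omega) hwt
  have hS' := hS'card ▸ pgCeil_le_pgDelta_sub_one (by omega) (hwt'.trans hwt)
  have hT : (S ∪ S'.erase H').card ≤ Fintype.card F := by
    have := card_union_le S (S'.erase H')
    have := card_erase_of_mem hH'S'
    have := two_mul_pgDelta_le (p := p) hh hn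
    rw [hF]
    omega
  have hH'T : ∀ K ∈ S ∪ S'.erase H', ¬ H' ≤ K := by
    intro K hK
    obtain ⟨hKn, hne⟩ : finrank F K = n ∧ K ≠ H' := by
      rcases mem_union.1 hK with hKS | hKS'
      exacts [⟨hShyp K hKS, ne_of_mem_of_not_mem hKS hH'S⟩,
        ⟨hS'hyp K (mem_of_mem_erase hKS'), ne_of_mem_erase hKS'⟩]
    exact Submodule.not_le_of_finrank_eq_of_ne (hKn.trans (hS'hyp H' hH'S').symm) hne
  obtain ⟨P, hPH', hPT⟩ :=
    exists_pgPoint_le_forall_not_le (by rw [hS'hyp H' hH'S']; omega) _ hH'T hT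
  have hc'P : c' P = β H' := by
    rw [hrepc']
    exact sum_mul_pgInd_eq_of_forall_not_le hH'S' hPH'
      fun K hK hne => hPT K (mem_union_right _ (mem_erase.2 ⟨hne, hK⟩))
  have hcP : c P ≠ 0 := hsupp (show c' P ≠ 0 from hc'P ▸ hβ H' hH'S')
  rw [hrepc] at hcP
  obtain ⟨H, hHS, hPH⟩ := exists_mem_le_of_sum_mul_pgInd_ne_zero hcP
  exact hPT H (mem_union_left _ hHS) hPH

/-- Proposition: if `supp(c') ⊆ supp(c)`, `wt(c) ≤ W(n,q)`, and `c`, `c'` are written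
as combinations of exactly `⌈wt/θ_{n−1}⌉` hyperplanes with nonzero coefficients over
the hyperplane sets `S`, `S'` respectively, then `S' ⊆ S`. -/
theorem statement_8 (p h n : ℕ) (hp : p.Prime) (hh : 2 ≤ h) (hn : 2 ≤ n)
    (hq27 : 27 < p ^ h)
    (hq1 : 2 < h → max 32 (2 ^ (2 * n - 4)) ≤ p ^ h)
    (hq2 : h = 2 → 2 ^ (2 * n) ≤ p ^ h)
    (F : Type) [Field F] [Fintype F] (hF : Fintype.card F = p ^ h)
    (c c' : PGPoint F n → ZMod p) (hc : c ∈ pgCode p F n) (hc' : c' ∈ pgCode p F n)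
    (hsupp : {P : PGPoint F n | c' P ≠ 0} ⊆ {P : PGPoint F n | c P ≠ 0})
    (hwt : (pgWt p F n c : ℤ) ≤ pgW p h n)
    (S S' : Finset (Submodule F (Fin (n + 1) → F)))
    (hScard : S.card = pgCeil (p ^ h) (pgWt p F n c) ((n : ℤ) - 1))
    (hS'card : S'.card = pgCeil (p ^ h) (pgWt p F n c') ((n : ℤ) - 1))
    (hShyp : ∀ H ∈ S, finrank F H = n) (hS'hyp : ∀ H ∈ S', finrank F H = n)
    (α β : Submodule F (Fin (n + 1) → F) → ZMod p)
    (hα : ∀ H ∈ S, α H ≠ 0) (hβ : ∀ H ∈ S', β H ≠ 0)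
    (hrepc : c = fun P => ∑ H ∈ S, α H * pgInd p F n H P)
    (hrepc' : c' = fun P => ∑ H ∈ S', β H * pgInd p F n H P) :
    S' ⊆ S :=
  statement_8_general p h n hh hn F hF c c' hsupp hwt S S' hScard hS'card hShyp hS'hyp α β hβ hrepc
    hrepc'
end
end

section
/- Under the standing assumptions, let c be a codeword of C_{n−1}(n,q) with wt(c) ≤ W(n,q) and set m_c := ⌈wt(c)/θ_{n−1}⌉. Suppose S and S' are sets of exactly m_c pairwise distinct hyperplanes and (α_H)_{H∈S}, (β_H)_{H∈S'} are nonzero scalars in ℤ/pℤ with c = Σ_{H∈S} α_H·f_H = Σ_{H∈S'} β_H·f_H. Then S = S' and α_H = β_H for every H ∈ S; that is, the set of hyperplanes and the coefficients in such a representation of c are uniquely determined by c. -/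
open Module

noncomputable section

open scoped Classical

/-- Linear independence of few hyperplane indicator functions. -/
lemma pg_indep (p n : ℕ) (hn : 2 ≤ n) (F : Type) [Field F] [Fintype F]
    (T : Finset (Submodule F (Fin (n + 1) → F)))
    (hT : ∀ H ∈ T, finrank F H = n) (hcard : T.card ≤ Fintype.card F)
    (γ : Submodule F (Fin (n + 1) → F) → ZMod p)
    (hsum : ∀ P : PGPoint F n, ∑ H ∈ T, γ H * pgInd p F n H P = 0)
    (H0 : Submodule F (Fin (n + 1) → F)) (hH0 : H0 ∈ T) : γ H0 = 0 := by
  classical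
  set q := Fintype.card F with hqdef
  have hq2 : 2 ≤ q := Fintype.one_lt_card
  -- cardinality of a submodule as a filter over all vectors
  have hcardW : ∀ W : Submodule F (Fin (n + 1) → F),
      (Finset.univ.filter (fun v => v ∈ W)).card = q ^ finrank F W := by
    intro W
    rw [← Fintype.card_subtype]
    exact card_eq_pow_finrank (K := F) (V := W)
  -- every hyperplane different from H0 meets H0 in a subspace of dimension < n
  have hinf : ∀ H ∈ T.erase H0, finrank F ↥(H0 ⊓ H) < n := by
    intro H hH
    obtain ⟨hne, hHT⟩ := Finset.mem_erase.mp hH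
    have hlt : H0 ⊓ H < H0 := by
      refine lt_of_le_of_ne inf_le_left ?_
      intro heq
      have hle : H0 ≤ H := by rw [← heq]; exact inf_le_right
      exact hne (Submodule.eq_of_le_of_finrank_eq hle
        (by rw [hT H0 hH0, hT H hHT])).symm
    have := Submodule.finrank_lt_finrank_of_lt hlt
    rwa [hT H0 hH0] at this
  -- find a vector in H0 avoiding all other hyperplanes of T
  set A : Finset (Fin (n + 1) → F) :=
    (Finset.univ.filter (fun v => v ∈ H0)).erase 0 with hA
  set C : Finset (Fin (n + 1) → F) :=
    (T.erase H0).biUnion (fun H => Finset.univ.filter (fun v => v ∈ H0 ⊓ H)) with hC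
  have hAcard : A.card + 1 = q ^ n := by
    rw [hA, Finset.card_erase_of_mem (by simp [Submodule.zero_mem]), hcardW, hT H0 hH0]
    have : 0 < q ^ n := pow_pos (by omega) n
    omega
  have hCcard : C.card ≤ (T.erase H0).card * q ^ (n - 1) := by
    refine le_trans (Finset.card_biUnion_le) ?_
    refine le_trans (Finset.sum_le_sum (fun H hH => ?_)) (by
      rw [Finset.sum_const, smul_eq_mul])
    rw [hcardW]
    exact pow_le_pow_right₀ (by omega) (by have := hinf H hH; omega)
  have hexists : ∃ v ∈ A, v ∉ C := by
    by_contra hcon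
    push_neg at hcon
    have hsub : A ⊆ C := fun v hv => hcon v hv
    have hle := Finset.card_le_card hsub
    have hkq : (T.erase H0).card + 1 ≤ q := by
      rw [Finset.card_erase_of_mem hH0]
      have : 1 ≤ T.card := Finset.card_pos.mpr ⟨H0, hH0⟩
      omega
    have hB2 : 2 ≤ q ^ (n - 1) := le_trans hq2 (Nat.le_self_pow (by omega) q)
    have hqn : q ^ n = q * q ^ (n - 1) := by
      rw [← pow_succ']
      congr 1
      omega
    -- cast to ℤ and derive a contradiction
    have h1 : (A.card : ℤ) ≤ (C.card : ℤ) := by exact_mod_cast hle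
    have h2 : (C.card : ℤ) ≤ ((T.erase H0).card : ℤ) * (q ^ (n - 1) : ℕ) := by
      exact_mod_cast hCcard
    have h3 : ((T.erase H0).card : ℤ) ≤ (q : ℤ) - 1 := by
      have := hkq; omega
    have h4 : (A.card : ℤ) + 1 = (q : ℤ) * ((q ^ (n - 1) : ℕ) : ℤ) := by
      have := hAcard
      rw [hqn] at this
      exact_mod_cast this
    have h5 : (2 : ℤ) ≤ ((q ^ (n - 1) : ℕ) : ℤ) := by exact_mod_cast hB2
    nlinarith [mul_le_mul_of_nonneg_right h3 (by positivity : (0:ℤ) ≤ ((q ^ (n - 1) : ℕ) : ℤ))]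
  obtain ⟨v, hvA, hvC⟩ := hexists
  have hv0 : v ≠ 0 := (Finset.mem_erase.mp hvA).1
  have hvH0 : v ∈ H0 := by
    have := (Finset.mem_erase.mp hvA).2
    simpa using this
  -- the projective point spanned by v
  set P : PGPoint F n := ⟨Submodule.span F {v}, finrank_span_singleton hv0⟩ with hP
  have hPH0 : P.1 ≤ H0 := by
    rw [hP]
    exact Submodule.span_le.mpr (by simpa using hvH0)
  have hPother : ∀ H ∈ T, H ≠ H0 → ¬ P.1 ≤ H := by
    intro H hHT hne hle
    have hvH : v ∈ H := hle (Submodule.mem_span_singleton_self v)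
    apply hvC
    rw [hC]
    refine Finset.mem_biUnion.mpr ⟨H, Finset.mem_erase.mpr ⟨hne, hHT⟩, ?_⟩
    simp [Submodule.mem_inf, hvH0, hvH]
  have := hsum P
  rw [Finset.sum_eq_single H0 (fun H hHT hne => by
      rw [pgInd, if_neg (hPother H hHT hne), mul_zero])
    (fun h => absurd hH0 h)] at this
  rw [pgInd, if_pos hPH0, mul_one] at this
  exact this

/-- The bound on `m_c`. -/
lemma pg_mc_bound (p h n : ℕ) (hp : p.Prime) (hh : 2 ≤ h) (hn : 2 ≤ n)
    (hq27 : 27 < p ^ h) (w : ℕ) (hw : (w : ℤ) ≤ pgW p h n) :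
    2 * pgCeil (p ^ h) w ((n : ℤ) - 1) ≤ p ^ h := by
  have hq0 : 1 ≤ p ^ h := Nat.one_le_pow _ _ hp.pos
  -- θ is positive
  have hθ : 0 < pgTheta (p ^ h) ((n : ℤ) - 1) := by
    rw [pgTheta]
    refine Finset.sum_pos (fun i _ => pow_pos (by omega) i) ?_
    refine Finset.nonempty_range_iff.mpr ?_
    simp only [ne_eq, Int.toNat_eq_zero, not_le]
    omega
  -- ceiling bound
  have hceil : (pgCeil (p ^ h) w ((n : ℤ) - 1) : ℤ) ≤
      max (pgDelta p h n - 1) 0 := by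
    rw [pgCeil]
    have h1 : ⌈(w : ℚ) / ((pgTheta (p ^ h) ((n : ℤ) - 1) : ℤ) : ℚ)⌉ ≤ pgDelta p h n - 1 := by
      rw [Int.ceil_le]
      rw [div_le_iff₀ (by exact_mod_cast hθ)]
      have : (w : ℤ) ≤ (pgDelta p h n - 1) * pgTheta (p ^ h) ((n : ℤ) - 1) := by
        rw [pgW] at hw
        convert hw using 3
      exact_mod_cast this
    omega
  -- 2Δ ≤ q as reals/ints
  have hΔ : 2 * pgDelta p h n ≤ (p ^ h : ℤ) := by
    have hqR : (27 : ℝ) < ((p : ℝ) ^ h) := by exact_mod_cast hq27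
    have hpR : (0 : ℝ) ≤ (p : ℝ) := by positivity
    rcases lt_or_ge 2 h with hh2 | hh2
    · -- h > 2 : Δ = ⌊√q / 2^(n-2)⌋ ≤ √q ≤ q/2
      rw [pgDelta, if_pos hh2]
      set s := Real.sqrt ((p : ℝ) ^ h) with hs
      have hs0 : 0 ≤ s := Real.sqrt_nonneg _
      have hs2 : s * s = (p : ℝ) ^ h := Real.mul_self_sqrt (by positivity)
      have hpow1 : (1 : ℝ) ≤ (2 : ℝ) ^ ((n : ℤ) - 2) :=
        one_le_zpow₀ (by norm_num) (by omega)
      have hdiv : s / (2 : ℝ) ^ ((n : ℤ) - 2) ≤ s := by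
        apply div_le_self hs0 hpow1
      have hsq : s ≤ ((p : ℝ) ^ h) / 2 := by nlinarith [sq_nonneg (s - 2)]
      have hfl : (⌊s / (2 : ℝ) ^ ((n : ℤ) - 2)⌋ : ℝ) ≤ ((p : ℝ) ^ h) / 2 :=
        le_trans (Int.floor_le _) (le_trans hdiv hsq)
      have : (2 : ℝ) * (⌊s / (2 : ℝ) ^ ((n : ℤ) - 2)⌋ : ℝ) ≤ (p : ℝ) ^ h := by linarith
      exact_mod_cast this
    · -- h = 2 : Δ = ⌊p / 2^n⌋ ≤ p/4 and 2·(p/4) ≤ p ≤ p²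
      have hh2' : h = 2 := by omega
      rw [pgDelta, if_neg (by omega)]
      have hp2 : (2 : ℝ) ≤ (p : ℝ) := by
        exact_mod_cast hp.two_le
      have hpow4 : (4 : ℝ) ≤ (2 : ℝ) ^ (n : ℤ) := by
        calc (4 : ℝ) = (2 : ℝ) ^ (2 : ℤ) := by norm_num
        _ ≤ (2 : ℝ) ^ (n : ℤ) := by
            apply zpow_le_zpow_right₀ (by norm_num)
            omega
      have hdiv : (p : ℝ) / (2 : ℝ) ^ (n : ℤ) ≤ (p : ℝ) / 4 := by
        apply div_le_div_of_nonneg_left hpR (by norm_num) hpow4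
      have hfl : (⌊(p : ℝ) / (2 : ℝ) ^ (n : ℤ)⌋ : ℝ) ≤ (p : ℝ) / 4 :=
        le_trans (Int.floor_le _) hdiv
      have hple : (p : ℝ) ≤ (p : ℝ) ^ h := by
        rw [hh2']
        nlinarith
      have : (2 : ℝ) * (⌊(p : ℝ) / (2 : ℝ) ^ (n : ℤ)⌋ : ℝ) ≤ (p : ℝ) ^ h := by
        nlinarith
      exact_mod_cast this
  have hΔ' : 2 * pgDelta p h n ≤ ((p ^ h : ℕ) : ℤ) := by exact_mod_cast hΔ
  omega

/-- Proposition: a codeword `c` with `wt(c) ≤ W(n,q)` determines uniquely the set of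
`m_c = ⌈wt(c)/θ_{n−1}⌉` hyperplanes and the nonzero coefficients in a representation
of `c` as a linear combination of that many different hyperplanes. -/
theorem statement_9 (p h n : ℕ) (hp : p.Prime) (hh : 2 ≤ h) (hn : 2 ≤ n)
    (hq27 : 27 < p ^ h)
    (hq1 : 2 < h → max 32 (2 ^ (2 * n - 4)) ≤ p ^ h)
    (hq2 : h = 2 → 2 ^ (2 * n) ≤ p ^ h)
    (F : Type) [Field F] [Fintype F] (hF : Fintype.card F = p ^ h)
    (c : PGPoint F n → ZMod p) (hc : c ∈ pgCode p F n)
    (hwt : (pgWt p F n c : ℤ) ≤ pgW p h n)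
    (S S' : Finset (Submodule F (Fin (n + 1) → F)))
    (hScard : S.card = pgCeil (p ^ h) (pgWt p F n c) ((n : ℤ) - 1))
    (hS'card : S'.card = pgCeil (p ^ h) (pgWt p F n c) ((n : ℤ) - 1))
    (hShyp : ∀ H ∈ S, finrank F H = n) (hS'hyp : ∀ H ∈ S', finrank F H = n)
    (α β : Submodule F (Fin (n + 1) → F) → ZMod p)
    (hα : ∀ H ∈ S, α H ≠ 0) (hβ : ∀ H ∈ S', β H ≠ 0)
    (hrep : c = fun P => ∑ H ∈ S, α H * pgInd p F n H P)
    (hrep' : c = fun P => ∑ H ∈ S', β H * pgInd p F n H P) :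
    S = S' ∧ ∀ H ∈ S, α H = β H := by
  classical
  set T : Finset (Submodule F (Fin (n + 1) → F)) := S ∪ S' with hT
  set γ : Submodule F (Fin (n + 1) → F) → ZMod p :=
    fun H => (if H ∈ S then α H else 0) - (if H ∈ S' then β H else 0) with hγ
  have e1 : ∀ P : PGPoint F n, ∑ H ∈ T, (if H ∈ S then α H else 0) * pgInd p F n H P
      = ∑ H ∈ S, α H * pgInd p F n H P := by
    intro P
    rw [← Finset.sum_subset (Finset.subset_union_left)
      (fun H _ hHS => by rw [if_neg hHS, zero_mul])]
    exact Finset.sum_congr rfl (fun H hH => by rw [if_pos hH])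
  have e2 : ∀ P : PGPoint F n, ∑ H ∈ T, (if H ∈ S' then β H else 0) * pgInd p F n H P
      = ∑ H ∈ S', β H * pgInd p F n H P := by
    intro P
    rw [← Finset.sum_subset (Finset.subset_union_right)
      (fun H _ hHS => by rw [if_neg hHS, zero_mul])]
    exact Finset.sum_congr rfl (fun H hH => by rw [if_pos hH])
  have hsum : ∀ P : PGPoint F n, ∑ H ∈ T, γ H * pgInd p F n H P = 0 := by
    intro P
    have : ∑ H ∈ T, γ H * pgInd p F n H P
        = ∑ H ∈ T, ((if H ∈ S then α H else 0) * pgInd p F n H P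
          - (if H ∈ S' then β H else 0) * pgInd p F n H P) := by
      refine Finset.sum_congr rfl (fun H _ => ?_)
      rw [hγ]
      ring
    rw [this, Finset.sum_sub_distrib, e1 P, e2 P]
    have h1 : c P = ∑ H ∈ S, α H * pgInd p F n H P := by rw [hrep]
    have h2 : c P = ∑ H ∈ S', β H * pgInd p F n H P := by rw [hrep']
    rw [← h1, ← h2, sub_self]
  have hTcard : T.card ≤ Fintype.card F := by
    rw [hF]
    have hu := Finset.card_union_le S S'
    rw [← hT, hScard, hS'card] at hu
    have hb := pg_mc_bound p h n hp hh hn hq27 (pgWt p F n c) hwt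
    omega
  have hThyp : ∀ H ∈ T, finrank F H = n := fun H hH =>
    (Finset.mem_union.mp hH).elim (hShyp H) (hS'hyp H)
  have hγ0 : ∀ H ∈ T, γ H = 0 := fun H hH =>
    pg_indep p n hn F T hThyp hTcard γ hsum H hH
  have hSS' : S ⊆ S' := by
    intro H hH
    by_contra hH'
    have h0 := hγ0 H (Finset.mem_union_left _ hH)
    rw [hγ] at h0
    simp only [if_pos hH, if_neg hH', sub_zero] at h0
    exact hα H hH h0
  have hS'S : S' ⊆ S := by
    intro H hH
    by_contra hH'
    have h0 := hγ0 H (Finset.mem_union_right _ hH)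
    rw [hγ] at h0
    simp only [if_pos hH, if_neg hH', zero_sub, neg_eq_zero] at h0
    exact hβ H hH h0
  refine ⟨Finset.Subset.antisymm hSS' hS'S, fun H hH => ?_⟩
  have h0 := hγ0 H (Finset.mem_union_left _ hH)
  rw [hγ] at h0
  simp only [if_pos hH, if_pos (hSS' hH)] at h0
  exact sub_eq_zero.mp h0
end
end
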